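/- arXiv:2106.08090 — 2 statements merged into one kernel-verified Lean document; each statement's English description precedes it below -/
import Mathlib

section
/- Strassen–Winograd's algorithm computes the 2×2 matrix product with seven multiplications: with α = (a₃−a₁)(b₂−b₄), β = (a₃+a₄)(b₂−b₁), γ = a₁b₁ + (a₃+a₄−a₁)(b₁−b₂+b₄), the product of [[a₁,a₂],[a₃,a₄]] and [[b₁,b₂],[b₃,b₄]] equals [[a₁b₁+a₂b₃, β+γ+(a₁+a₂−a₃−a₄)b₄], [α+γ+a₄(b₂+b₃−b₁−b₄), α+β+γ]]. -/
theorem stmt_8 {R : Type*} [CommRing R] (a₁ a₂ a₃ a₄ b₁ b₂ b₃ b₄ α β γ : R)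
    (hα : α = (a₃ - a₁) * (b₂ - b₄))
    (hβ : β = (a₃ + a₄) * (b₂ - b₁))
    (hγ : γ = a₁ * b₁ + (a₃ + a₄ - a₁) * (b₁ - b₂ + b₄)) :
    (!![a₁, a₂; a₃, a₄] : Matrix (Fin 2) (Fin 2) R) * !![b₁, b₂; b₃, b₄] =
      !![a₁ * b₁ + a₂ * b₃, β + γ + (a₁ + a₂ - a₃ - a₄) * b₄;
         α + γ + a₄ * (b₂ + b₃ - b₁ - b₄), α + β + γ] := by
  subst hα hβ hγ
  rw [Matrix.mul_fin_two]
  congr 1 <;> ring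
end

section
/- Separation of variables for Kronecker sum operators: let Φ : U → U and Ψ : V → V be linear maps on vector spaces over a field, and let u ∈ U, v ∈ V be nonzero. If (Φ ⊗ I + I ⊗ Ψ)(u ⊗ v) = 0, then there exists a scalar λ such that Φ(u) = λu and Ψ(v) = −λv. -/
open scoped TensorProduct in
theorem stmt_19 {K U V : Type*} [Field K] [AddCommGroup U] [Module K U]
    [AddCommGroup V] [Module K V] (Φ : U →ₗ[K] U) (Ψ : V →ₗ[K] V)
    (u : U) (v : V) (hu : u ≠ 0) (hv : v ≠ 0)
    (h : (TensorProduct.map Φ LinearMap.id + TensorProduct.map LinearMap.id Ψ :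
        U ⊗[K] V →ₗ[K] U ⊗[K] V) (u ⊗ₜ[K] v) = 0) :
    ∃ lam : K, Φ u = lam • u ∧ Ψ v = (-lam) • v := by
  -- pick dual functionals
  obtain ⟨φ0, hφ0⟩ : ∃ φ : Module.Dual K U, φ u ≠ 0 := by
    by_contra hc
    push_neg at hc
    exact hu ((Module.forall_dual_apply_eq_zero_iff K u).mp hc)
  obtain ⟨ψ0, hψ0⟩ : ∃ ψ : Module.Dual K V, ψ v ≠ 0 := by
    by_contra hc
    push_neg at hc
    exact hv ((Module.forall_dual_apply_eq_zero_iff K v).mp hc)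
  set φ : Module.Dual K U := (φ0 u)⁻¹ • φ0 with hφdef
  set ψ : Module.Dual K V := (ψ0 v)⁻¹ • ψ0 with hψdef
  have hφu : φ u = 1 := by simp [hφdef, inv_mul_cancel₀ hφ0]
  have hψv : ψ v = 1 := by simp [hψdef, inv_mul_cancel₀ hψ0]
  have h0 : Φ u ⊗ₜ[K] v + u ⊗ₜ[K] Ψ v = 0 := by
    simpa using h
  set lam : K := φ (Φ u) with hlam
  refine ⟨lam, ?_, ?_⟩
  · -- apply id ⊗ ψ
    have := congrArg ((TensorProduct.rid K U).toLinearMap.comp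
      (TensorProduct.map LinearMap.id ψ)) h0
    simp only [map_add, map_zero, LinearMap.comp_apply, TensorProduct.map_tmul,
      LinearMap.id_coe, id_eq, LinearEquiv.coe_coe, TensorProduct.rid_tmul, hψv,
      one_smul] at this
    -- this : Φ u + (ψ (Ψ v)) • u = 0
    have h1 := congrArg φ this
    simp only [map_add, map_smul, map_zero, hφu, smul_eq_mul, mul_one] at h1
    -- h1 : lam + ψ (Ψ v) = 0
    have h2 : ψ (Ψ v) = -lam := by rw [hlam]; linear_combination h1
    rw [h2] at this
    have : Φ u = lam • u := by
      rw [neg_smul] at this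
      linear_combination (norm := module) this
    exact this
  · -- apply φ ⊗ id
    have := congrArg ((TensorProduct.lid K V).toLinearMap.comp
      (TensorProduct.map φ LinearMap.id)) h0
    simp only [map_add, map_zero, LinearMap.comp_apply, TensorProduct.map_tmul,
      LinearMap.id_coe, id_eq, LinearEquiv.coe_coe, TensorProduct.lid_tmul, hφu,
      one_smul] at this
    -- this : lam • v + Ψ v = 0
    rw [← hlam] at this
    have : Ψ v = -lam • v := by
      linear_combination (norm := module) this
    simpa using this
end
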